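/- arXiv:2309.01222 — 2 statements merged into one kernel-verified Lean document; each statement's English description precedes it below -/
import Mathlib

section
/- Let F = ℤ/2ℤ and let M and N be modules over the polynomial ring F[X]. Suppose B : M × N → F is an F-bilinear pairing satisfying the adjointness property B(X·m, n) = B(m, X·n) for all m ∈ M and n ∈ N. If there exist elements c₋ ∈ M and c₊ ∈ N with X·c₋ = 0, X·c₊ = 0, and B(c₋, c₊) ≠ 0, then M admits a direct summand (as an F[X]-module) isomorphic to F[X]/(X), i.e. to F with X acting by zero. -/
/-!
Write `b = B(c₋, c₊)`. Since `X • c₊ = 0`, adjointness makes `φ = B(·, c₊)` vanish on `X • M`,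
so `φ (p • m) = p(0) φ(m)`; likewise `p • c₋ = p(0) • c₋`. Hence `m ↦ (φ m / b) • c₋` is an
`F[X]`-linear projection of `M` onto `F[X] ∙ c₋`, which is therefore a direct summand. As
`c₋ ≠ 0` is killed by `X` and `(X)` is maximal, its annihilator is `(X)`, so
`F[X] ∙ c₋ ≅ F[X]/(X)`.
-/

open Polynomial

namespace Polynomial

variable {K M : Type*} [Field K] [AddCommGroup M] [Module K[X] M]

theorem torsionOf_eq_span_X {c : M} (hc : (X : K[X]) • c = 0) (hc₀ : c ≠ 0) :
    Ideal.torsionOf K[X] M c = Ideal.span {X} := by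
  refine ((PrincipalIdealRing.isMaximal_of_irreducible irreducible_X).eq_of_le ?_ ?_).symm
  · exact mt (Ideal.torsionOf_eq_top_iff K[X] c).mp hc₀
  · rwa [Ideal.span_le, Set.singleton_subset_iff, SetLike.mem_coe, Ideal.mem_torsionOf_iff]

variable [Module K M] [IsScalarTower K K[X] M]

theorem smul_eq_coeff_zero_smul_of_X_smul_eq_zero {c : M} (hc : (X : K[X]) • c = 0) (p : K[X]) :
    p • c = p.coeff 0 • c := by
  conv_lhs => rw [← X_mul_divX_add p]
  rw [add_smul, mul_comm, mul_smul, hc, smul_zero, zero_add, ← algebraMap_eq, algebraMap_smul]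

theorem map_smul_eq_coeff_zero_mul_of_map_X_smul_eq_zero {φ : M →ₗ[K] K}
    (hφ : ∀ m, φ ((X : K[X]) • m) = 0) (p : K[X]) (m : M) :
    φ (p • m) = p.coeff 0 * φ m := by
  conv_lhs => rw [← X_mul_divX_add p]
  rw [add_smul, mul_smul, map_add, hφ, zero_add, ← algebraMap_eq, algebraMap_smul, map_smul,
    smul_eq_mul]

noncomputable def projSpanSingleton (φ : M →ₗ[K] K) (hφ : ∀ m, φ ((X : K[X]) • m) = 0) {c : M}
    (hc : (X : K[X]) • c = 0) : M →ₗ[K[X]] K[X] ∙ c where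
  toFun m :=
    ⟨(φ m / φ c) • c, Submodule.smul_of_tower_mem _ _ (Submodule.mem_span_singleton_self c)⟩
  map_add' m m' := by
    ext
    simp only [map_add, add_div, add_smul, Submodule.coe_add]
  map_smul' p m := by
    have hc' : (X : K[X]) • (φ m / φ c) • c = 0 := by rw [smul_comm, hc, smul_zero]
    ext
    simp only [SetLike.val_smul, RingHom.id_apply,
      smul_eq_coeff_zero_smul_of_X_smul_eq_zero hc' p, smul_smul,
      map_smul_eq_coeff_zero_mul_of_map_X_smul_eq_zero hφ, mul_div_assoc]

theorem projSpanSingleton_apply_coe {φ : M →ₗ[K] K} (hφ : ∀ m, φ ((X : K[X]) • m) = 0) {c : M}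
    (hc : (X : K[X]) • c = 0) (hφc : φ c ≠ 0) (x : K[X] ∙ c) :
    projSpanSingleton φ hφ hc x = x := by
  obtain ⟨_, hx⟩ := x
  obtain ⟨p, rfl⟩ := Submodule.mem_span_singleton.mp hx
  ext
  change (φ (p • c) / φ c) • c = p • c
  rw [map_smul_eq_coeff_zero_mul_of_map_X_smul_eq_zero hφ, mul_div_assoc, div_self hφc, mul_one,
    smul_eq_coeff_zero_smul_of_X_smul_eq_zero hc p]

end Polynomial

theorem taut_foliation_summand_general
    {M N : Type*} [AddCommGroup M] [AddCommGroup N]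
    [Module (Polynomial (ZMod 2)) M] [Module (Polynomial (ZMod 2)) N]
    [Module (ZMod 2) M] [Module (ZMod 2) N]
    [IsScalarTower (ZMod 2) (Polynomial (ZMod 2)) M]
    (B : M →ₗ[ZMod 2] N →ₗ[ZMod 2] ZMod 2)
    (hB : ∀ (m : M) (n : N),
      B ((Polynomial.X : Polynomial (ZMod 2)) • m) n
        = B m ((Polynomial.X : Polynomial (ZMod 2)) • n))
    (cm : M) (cp : N)
    (hcm : (Polynomial.X : Polynomial (ZMod 2)) • cm = 0)
    (hcp : (Polynomial.X : Polynomial (ZMod 2)) • cp = 0)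
    (hpair : B cm cp ≠ 0) :
    ∃ S T : Submodule (Polynomial (ZMod 2)) M, IsCompl S T ∧
      Nonempty (S ≃ₗ[Polynomial (ZMod 2)]
        (Polynomial (ZMod 2) ⧸ Ideal.span {(Polynomial.X : Polynomial (ZMod 2))})) := by
  have hφ : ∀ m, B.flip cp ((X : (ZMod 2)[X]) • m) = 0 := fun m => by
    rw [LinearMap.flip_apply, hB, hcp, map_zero]
  have hcm₀ : cm ≠ 0 := by
    rintro rfl
    exact hpair (by rw [map_zero, LinearMap.zero_apply])
  refine ⟨_, _, LinearMap.isCompl_of_proj (projSpanSingleton_apply_coe hφ hcm hpair), ⟨?_⟩⟩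
  exact (Ideal.quotTorsionOfEquivSpanSingleton _ _ cm).symm.trans
    (Submodule.quotEquivOfEq _ _ (torsionOf_eq_span_X hcm hcm₀))

/-- Let `F = ℤ/2ℤ` and let `M`, `N` be modules over `F[X]`.  If `B : M × N → F` is an
`F`-bilinear pairing with `B (X • m) n = B m (X • n)`, and there are `cm ∈ M`, `cp ∈ N`
killed by `X` with `B cm cp ≠ 0`, then `M` has a direct `F[X]`-summand isomorphic to
`F[X]/(X)`. -/
theorem taut_foliation_summand
    {M N : Type*} [AddCommGroup M] [AddCommGroup N]
    [Module (Polynomial (ZMod 2)) M] [Module (Polynomial (ZMod 2)) N]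
    [Module (ZMod 2) M] [Module (ZMod 2) N]
    [IsScalarTower (ZMod 2) (Polynomial (ZMod 2)) M]
    [IsScalarTower (ZMod 2) (Polynomial (ZMod 2)) N]
    (B : M →ₗ[ZMod 2] N →ₗ[ZMod 2] ZMod 2)
    (hB : ∀ (m : M) (n : N),
      B ((Polynomial.X : Polynomial (ZMod 2)) • m) n
        = B m ((Polynomial.X : Polynomial (ZMod 2)) • n))
    (cm : M) (cp : N)
    (hcm : (Polynomial.X : Polynomial (ZMod 2)) • cm = 0)
    (hcp : (Polynomial.X : Polynomial (ZMod 2)) • cp = 0)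
    (hpair : B cm cp ≠ 0) :
    ∃ S T : Submodule (Polynomial (ZMod 2)) M, IsCompl S T ∧
      Nonempty (S ≃ₗ[Polynomial (ZMod 2)]
        (Polynomial (ZMod 2) ⧸ Ideal.span {(Polynomial.X : Polynomial (ZMod 2))})) :=
  taut_foliation_summand_general B hB cm cp hcm hcp hpair
end

section
/- Let F = ℤ/2ℤ, let ι be a finite index set, and let k : ι → ℕ assign to each i a positive integer k i. Let M = ⨁_{i ∈ ι} F[X]/(X^{k i}) as an F[X]-module. Suppose there exist c ∈ M with X·c = 0 and an F-linear map φ : M → F with φ(X·m) = 0 for all m ∈ M and φ(c) ≠ 0. Then k i = 1 for some i ∈ ι. -/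
open DirectSum

/-! If no `k i` equals `1`, then in each summand `F[X]/(X ^ k i)` the kernel of `X` lies in the
image of `X` (for `k i ≥ 2` the kernel is spanned by `X ^ (k i - 1)`, and for `k i = 0` the summand
is zero), hence the same holds in `M`. So `c = X • m` for some `m`, and `φ c = φ (X • m) = 0`. -/

theorem Ideal.Quotient.exists_eq_smul_of_smul_eq_zero {R : Type*} [CommRing R] {x : R}
    (hx : IsLeftRegular x) {n : ℕ} (hn : n ≠ 1) {q : R ⧸ Ideal.span {x ^ n}} (hq : x • q = 0) :
    ∃ m, q = x • m := by
  obtain ⟨p, rfl⟩ := Ideal.Quotient.mk_surjective q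
  rcases n with _ | _ | n
  · exact ⟨0, by simp [Ideal.Quotient.eq_zero_iff_mem]⟩
  · exact absurd rfl hn
  · obtain ⟨r, hr : r * x ^ (n + 2) = x * p⟩ :=
      Ideal.mem_span_singleton'.mp (Ideal.Quotient.eq_zero_iff_mem.mp hq)
    have hp : p = x * (x ^ n * r) :=
      hx <| show x * p = x * (x * (x ^ n * r)) by rw [← hr]; ring
    exact ⟨Ideal.Quotient.mk _ (x ^ n * r), by rw [hp]; rfl⟩

theorem DirectSum.exists_eq_smul_of_smul_eq_zero {R ι : Type*} [Semiring R] {M : ι → Type*}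
    [∀ i, AddCommMonoid (M i)] [∀ i, Module R (M i)] {a : R}
    (h : ∀ i (y : M i), a • y = 0 → ∃ z, y = a • z) {c : ⨁ i, M i} (hc : a • c = 0) :
    ∃ z, c = a • z := by
  classical
  choose z hz using fun i => h i (c i) (by rw [← smul_apply, hc, zero_apply])
  refine ⟨∑ i ∈ c.support, of M i (z i), ?_⟩
  simp_rw [Finset.smul_sum, ← of_smul, ← hz]
  exact (sum_support_of c).symm

theorem cyclic_summand_of_length_one_general
    {ι : Type*} (k : ι → ℕ)
    (c : ⨁ i : ι, Polynomial (ZMod 2) ⧸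
      Ideal.span {(Polynomial.X : Polynomial (ZMod 2)) ^ k i})
    (hc : (Polynomial.X : Polynomial (ZMod 2)) • c = 0)
    (φ : (⨁ i : ι, Polynomial (ZMod 2) ⧸
      Ideal.span {(Polynomial.X : Polynomial (ZMod 2)) ^ k i}) →ₗ[ZMod 2] ZMod 2)
    (hφX : ∀ m, φ ((Polynomial.X : Polynomial (ZMod 2)) • m) = 0)
    (hφc : φ c ≠ 0) :
    ∃ i, k i = 1 := by
  by_contra! hk
  obtain ⟨m, rfl⟩ := DirectSum.exists_eq_smul_of_smul_eq_zero
    (fun i _ => Ideal.Quotient.exists_eq_smul_of_smul_eq_zero Polynomial.isRegular_X.left (hk i)) hc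
  exact hφc (hφX m)

/-- Let `F = ℤ/2ℤ`, `ι` a finite index set, `k i ≥ 1`, and
`M = ⨁ i, F[X]/(X ^ k i)` as an `F[X]`-module.  If there are `c ∈ M` with `X • c = 0`
and an `F`-linear `φ : M → F` with `φ (X • m) = 0` for all `m` and `φ c ≠ 0`, then
`k i = 1` for some `i`. -/
theorem cyclic_summand_of_length_one
    {ι : Type*} [Fintype ι] (k : ι → ℕ) (hk : ∀ i, 0 < k i)
    (c : ⨁ i : ι, Polynomial (ZMod 2) ⧸
      Ideal.span {(Polynomial.X : Polynomial (ZMod 2)) ^ k i})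
    (hc : (Polynomial.X : Polynomial (ZMod 2)) • c = 0)
    (φ : (⨁ i : ι, Polynomial (ZMod 2) ⧸
      Ideal.span {(Polynomial.X : Polynomial (ZMod 2)) ^ k i}) →ₗ[ZMod 2] ZMod 2)
    (hφX : ∀ m, φ ((Polynomial.X : Polynomial (ZMod 2)) • m) = 0)
    (hφc : φ c ≠ 0) :
    ∃ i, k i = 1 :=
  cyclic_summand_of_length_one_general k c hc φ hφX hφc
end
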